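/- arXiv:1210.7349 — 2 statements merged into one kernel-verified Lean document; each statement's English description precedes it below -/
import Mathlib

section
/- Let F_1 and F_2 be perfect matchings of a graph G, let X ⊆ V(G), and let Z be the set of edges of G with both ends in X. Suppose that F_1 and F_2 contain exactly the same edges of δ(X) (the set of edges with exactly one end in X). Then (F_1 ∩ Z) ∪ (F_2 \ Z) and (F_2 ∩ Z) ∪ (F_1 \ Z) are both perfect matchings of G. -/
open Finset
open scoped Classical

/-- `F` is a perfect matching of `G`: a set of edges of `G` covering every vertex
exactly once. -/
noncomputable def IsPerfectMatchingSet
    {V : Type*} [Fintype V] (G : SimpleGraph V) (F : Finset (Sym2 V)) : Prop :=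
  F ⊆ G.edgeFinset ∧ ∀ v : V, (F.filter (fun e => v ∈ e)).card = 1

lemma swap_aux
    {V : Type*} [Fintype V] [DecidableEq V]
    (G : SimpleGraph V) (F₁ F₂ : Finset (Sym2 V))
    (hF₁ : IsPerfectMatchingSet G F₁) (hF₂ : IsPerfectMatchingSet G F₂)
    (X : Finset V)
    (Z : Finset (Sym2 V))
    (hZ : Z = G.edgeFinset.filter (fun e => ∀ a ∈ e, a ∈ X))
    (hagree :
      F₁.filter (fun e => ∃ a ∈ X, ∃ b, b ∉ X ∧ e = s(a, b)) =
      F₂.filter (fun e => ∃ a ∈ X, ∃ b, b ∉ X ∧ e = s(a, b))) :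
    IsPerfectMatchingSet G ((F₁ ∩ Z) ∪ (F₂ \ Z)) := by
  constructor
  · intro e he
    rcases Finset.mem_union.mp he with h | h
    · exact hF₁.1 (Finset.mem_inter.mp h).1
    · exact hF₂.1 (Finset.mem_sdiff.mp h).1
  intro v
  rw [Finset.card_eq_one]
  obtain ⟨e₁, he₁⟩ := Finset.card_eq_one.mp (hF₁.2 v)
  obtain ⟨e₂, he₂⟩ := Finset.card_eq_one.mp (hF₂.2 v)
  have key₁ : ∀ e, (e ∈ F₁ ∧ v ∈ e) ↔ e = e₁ := by
    intro e
    have := Finset.ext_iff.mp he₁ e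
    simp only [Finset.mem_filter, Finset.mem_singleton] at this; exact this
  have key₂ : ∀ e, (e ∈ F₂ ∧ v ∈ e) ↔ e = e₂ := by
    intro e
    have := Finset.ext_iff.mp he₂ e
    simp only [Finset.mem_filter, Finset.mem_singleton] at this; exact this
  have he₁F : e₁ ∈ F₁ ∧ v ∈ e₁ := (key₁ e₁).mpr rfl
  have he₂F : e₂ ∈ F₂ ∧ v ∈ e₂ := (key₂ e₂).mpr rfl
  have uniq₁ : ∀ e ∈ F₁, v ∈ e → e = e₁ := fun e heF hv => (key₁ e).mp ⟨heF, hv⟩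
  have uniq₂ : ∀ e ∈ F₂, v ∈ e → e = e₂ := fun e heF hv => (key₂ e).mp ⟨heF, hv⟩
  by_cases hvX : v ∈ X
  · obtain ⟨w, hw⟩ := Sym2.mem_iff_exists.mp he₁F.2
    by_cases hwX : w ∈ X
    · -- e₁ ∈ Z, and e₂ ∈ Z; answer is e₁
      have he₁Z : e₁ ∈ Z := by
        rw [hZ, Finset.mem_filter]
        refine ⟨hF₁.1 he₁F.1, ?_⟩
        intro a ha
        rw [hw] at ha
        rcases Sym2.mem_iff.mp ha with rfl | rfl
        · exact hvX
        · exact hwX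
      have he₂Z : e₂ ∈ Z := by
        obtain ⟨u, hu⟩ := Sym2.mem_iff_exists.mp he₂F.2
        by_cases huX : u ∈ X
        · rw [hZ, Finset.mem_filter]
          refine ⟨hF₂.1 he₂F.1, ?_⟩
          intro a ha
          rw [hu] at ha
          rcases Sym2.mem_iff.mp ha with rfl | rfl
          · exact hvX
          · exact huX
        · exfalso
          have : e₂ ∈ F₂.filter (fun e => ∃ a ∈ X, ∃ b, b ∉ X ∧ e = s(a, b)) :=
            Finset.mem_filter.mpr ⟨he₂F.1, v, hvX, u, huX, hu⟩
          rw [← hagree, Finset.mem_filter] at this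
          have he₂e₁ := uniq₁ e₂ this.1 he₂F.2
          have : u ∈ X := by
            have := he₁Z
            rw [hZ, Finset.mem_filter] at this
            exact this.2 u (by rw [← he₂e₁, hu]; exact Sym2.mem_mk_right v u)
          exact huX this
      refine ⟨e₁, ?_⟩
      ext e
      simp only [Finset.mem_filter, Finset.mem_union, Finset.mem_inter,
        Finset.mem_sdiff, Finset.mem_singleton]
      constructor
      · rintro ⟨h | h, hv⟩
        · exact uniq₁ e h.1 hv
        · exact absurd (uniq₂ e h.1 hv ▸ he₂Z) h.2
      · intro h; rw [h]
        exact ⟨Or.inl ⟨he₁F.1, he₁Z⟩, he₁F.2⟩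
    · -- e₁ in δ(X): e₁ = e₂, not in Z; answer is e₁
      have hδ : e₁ ∈ F₂ := by
        have : e₁ ∈ F₁.filter (fun e => ∃ a ∈ X, ∃ b, b ∉ X ∧ e = s(a, b)) :=
          Finset.mem_filter.mpr ⟨he₁F.1, v, hvX, w, hwX, hw⟩
        rw [hagree, Finset.mem_filter] at this
        exact this.1
      have he₁Z : e₁ ∉ Z := by
        rw [hZ, Finset.mem_filter]
        rintro ⟨-, h⟩
        exact hwX (h w (by rw [hw]; exact Sym2.mem_mk_right v w))
      have he₁e₂ : e₁ = e₂ := uniq₂ e₁ hδ he₁F.2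
      refine ⟨e₁, ?_⟩
      ext e
      simp only [Finset.mem_filter, Finset.mem_union, Finset.mem_inter,
        Finset.mem_sdiff, Finset.mem_singleton]
      constructor
      · rintro ⟨h | h, hv⟩
        · exact absurd (uniq₁ e h.1 hv ▸ he₁Z) (fun hh => hh h.2)
        · exact (uniq₂ e h.1 hv).trans he₁e₂.symm
      · intro h; rw [h]
        exact ⟨Or.inr ⟨hδ, he₁Z⟩, he₁F.2⟩
  · -- v ∉ X: answer is e₂
    have hnotZ : ∀ e, v ∈ e → e ∉ Z := by
      intro e hv hZe
      rw [hZ, Finset.mem_filter] at hZe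
      exact hvX (hZe.2 v hv)
    refine ⟨e₂, ?_⟩
    ext e
    simp only [Finset.mem_filter, Finset.mem_union, Finset.mem_inter,
      Finset.mem_sdiff, Finset.mem_singleton]
    constructor
    · rintro ⟨h | h, hv⟩
      · exact absurd h.2 (hnotZ e hv)
      · exact uniq₂ e h.1 hv
    · intro h; rw [h]
      exact ⟨Or.inr ⟨he₂F.1, hnotZ e₂ he₂F.2⟩, he₂F.2⟩

/-- Swapping two perfect matchings across a cut: if `F₁` and `F₂` agree on `δ(X)`,
and `Z` is the set of edges with both ends in `X`, then `(F₁ ∩ Z) ∪ (F₂ \ Z)` and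
`(F₂ ∩ Z) ∪ (F₁ \ Z)` are both perfect matchings. -/
theorem swap_matchings_across_cut
    {V : Type*} [Fintype V] [DecidableEq V]
    (G : SimpleGraph V) (F₁ F₂ : Finset (Sym2 V))
    (hF₁ : IsPerfectMatchingSet G F₁) (hF₂ : IsPerfectMatchingSet G F₂)
    (X : Finset V)
    (Z : Finset (Sym2 V))
    (hZ : Z = G.edgeFinset.filter (fun e => ∀ a ∈ e, a ∈ X))
    (hagree :
      F₁.filter (fun e => ∃ a ∈ X, ∃ b, b ∉ X ∧ e = s(a, b)) =
      F₂.filter (fun e => ∃ a ∈ X, ∃ b, b ∉ X ∧ e = s(a, b))) :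
    IsPerfectMatchingSet G ((F₁ ∩ Z) ∪ (F₂ \ Z)) ∧
    IsPerfectMatchingSet G ((F₂ ∩ Z) ∪ (F₁ \ Z)) := by
  exact ⟨swap_aux G F₁ F₂ hF₁ hF₂ X Z hZ hagree,
         swap_aux G F₂ F₁ hF₂ hF₁ X Z hZ hagree.symm⟩
end

section
/- Let (G, m) be a d-target and let x-u-v-y be a three-edge path in G with m(xu), m(vy) ≥ 1 such that x and y lie on a common region, and suppose that for every odd subset X ⊆ V(G) with |X|, |V(G) \ X| ≠ 1 we have m(δ(X)) ≥ d + 2. Then the pair (G', m') obtained by switching on x-u-v-y (adding edge xy if absent, decreasing m on xu and vy by 1 and increasing m on uv and xy by 1) is again a d-target; that is, m'(δ(v)) = d for every vertex and m'(δ(X)) ≥ d for every odd X. -/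
open Finset
open scoped Classical

/-- Switching along a three-edge path `x-u-v-y` of a `d`-target satisfying the
strengthened cut condition `m(δ(X)) ≥ d + 2` for odd `X` with `|X|, |V \ X| ≠ 1`
yields again a `d`-target: all weighted degrees are `d` and all odd cuts are ≥ `d`. -/
theorem switching_gives_target
    {V : Type*} [Fintype V] [DecidableEq V] (d : ℕ)
    (G : SimpleGraph V) (m : Sym2 V → ℕ)
    (hzero : ∀ e : Sym2 V, e ∉ G.edgeFinset → m e = 0)
    (hreg : ∀ w : V,
      ∑ e ∈ G.edgeFinset.filter (fun e => w ∈ e), m e = d)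
    (hodd : ∀ X : Finset V, Odd X.card →
      d ≤ ∑ e ∈ G.edgeFinset.filter
            (fun e => ∃ a ∈ X, ∃ b, b ∉ X ∧ e = s(a, b)), m e)
    (hstrong : ∀ X : Finset V, Odd X.card → X.card ≠ 1 →
      (Fintype.card V - X.card) ≠ 1 →
      d + 2 ≤ ∑ e ∈ G.edgeFinset.filter
            (fun e => ∃ a ∈ X, ∃ b, b ∉ X ∧ e = s(a, b)), m e)
    (x u v y : V)
    (hdist : x ≠ u ∧ x ≠ v ∧ x ≠ y ∧ u ≠ v ∧ u ≠ y ∧ v ≠ y)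
    (hxu : G.Adj x u) (huv : G.Adj u v) (hvy : G.Adj v y)
    (hmxu : 1 ≤ m s(x, u)) (hmvy : 1 ≤ m s(v, y))
    (G' : SimpleGraph V)
    (hG' : G' = G ⊔ SimpleGraph.fromEdgeSet {s(x, y)})
    (m' : Sym2 V → ℕ)
    (hm' : ∀ e : Sym2 V, m' e =
      if e = s(x, u) then m s(x, u) - 1
      else if e = s(v, y) then m s(v, y) - 1
      else if e = s(u, v) then m s(u, v) + 1
      else if e = s(x, y) then m s(x, y) + 1
      else m e) :
    (∀ w : V,
      ∑ e ∈ G'.edgeFinset.filter (fun e => w ∈ e), m' e = d) ∧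
    ∀ X : Finset V, Odd X.card →
      d ≤ ∑ e ∈ G'.edgeFinset.filter
            (fun e => ∃ a ∈ X, ∃ b, b ∉ X ∧ e = s(a, b)), m' e := by
  obtain ⟨hxu1, hxv1, hxy1, huv1, huy1, hvy1⟩ := hdist
  classical
  -- distinctness of the four relevant pairs
  have p12 : s(x, u) ≠ s(v, y) := by simp [Sym2.eq_iff]; tauto
  have p13 : s(x, u) ≠ s(u, v) := by simp [Sym2.eq_iff]; tauto
  have p14 : s(x, u) ≠ s(x, y) := by simp [Sym2.eq_iff]; tauto
  have p23 : s(v, y) ≠ s(u, v) := by simp [Sym2.eq_iff]; tauto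
  have p24 : s(v, y) ≠ s(x, y) := by simp [Sym2.eq_iff]; tauto
  have p34 : s(u, v) ≠ s(x, y) := by simp [Sym2.eq_iff]; tauto
  -- m' vanishes off G'
  have hzero' : ∀ e : Sym2 V, e ∉ G'.edgeFinset → m' e = 0 := by
    intro e he
    rw [SimpleGraph.mem_edgeFinset, hG'] at he
    simp only [SimpleGraph.edgeSet_sup, SimpleGraph.edgeSet_fromEdgeSet,
      Set.mem_union, Set.mem_diff, Set.mem_singleton_iff, not_or, not_and, not_not] at he
    obtain ⟨heG, hexy⟩ := he
    have h1 : e ≠ s(x, u) := by rintro rfl; exact heG hxu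
    have h2 : e ≠ s(v, y) := by rintro rfl; exact heG hvy
    have h3 : e ≠ s(u, v) := by rintro rfl; exact heG huv
    have h4 : e ≠ s(x, y) := by
      rintro rfl
      have := hexy rfl
      simp [Sym2.isDiag_iff_proj_eq] at this
      exact hxy1 this
    rw [hm' e, if_neg h1, if_neg h2, if_neg h3, if_neg h4]
    exact hzero e (by simpa [SimpleGraph.mem_edgeFinset] using heG)
  -- extending the sum to all of Sym2 V
  have hext : ∀ (H : SimpleGraph V) (f : Sym2 V → ℕ),
      (∀ e, e ∉ H.edgeFinset → f e = 0) →
      ∀ (P : Sym2 V → Prop) [DecidablePred P],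
      ∑ e ∈ H.edgeFinset.filter P, f e = ∑ e ∈ univ.filter P, f e := by
    intro H f hf P _
    apply Finset.sum_subset
    · intro e he
      simp only [Finset.mem_filter] at he ⊢
      exact ⟨Finset.mem_univ _, he.2⟩
    · intro e he hne
      apply hf
      intro heH
      exact hne (Finset.mem_filter.mpr ⟨heH, (Finset.mem_filter.mp he).2⟩)
  -- the key exchange identity
  have key : ∀ (P : Sym2 V → Prop) [DecidablePred P],
      (∑ e ∈ univ.filter P, m' e)
        + ((if P s(x, u) then 1 else 0) + (if P s(v, y) then 1 else 0))
      = (∑ e ∈ univ.filter P, m e)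
        + ((if P s(u, v) then 1 else 0) + (if P s(x, y) then 1 else 0)) := by
    intro P _
    have ind : ∀ c : Sym2 V, (if P c then 1 else 0) =
        ∑ e ∈ (univ : Finset (Sym2 V)), if e = c then (if P e then 1 else 0) else 0 := by
      intro c
      rw [Finset.sum_ite_eq' univ c (fun e => if P e then 1 else 0)]
      simp
    rw [Finset.sum_filter, Finset.sum_filter, ind s(x,u), ind s(v,y), ind s(u,v), ind s(x,y),
      ← Finset.sum_add_distrib, ← Finset.sum_add_distrib, ← Finset.sum_add_distrib,
      ← Finset.sum_add_distrib]
    apply Finset.sum_congr rfl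
    intro e _
    rw [hm' e]
    by_cases h1 : e = s(x, u)
    · subst h1
      rw [if_pos rfl, if_pos rfl, if_neg p12, if_neg p13, if_neg p14]
      split <;> omega
    by_cases h2 : e = s(v, y)
    · subst h2
      rw [if_neg h1, if_pos rfl, if_pos rfl, if_neg (Ne.symm p12), if_neg p23, if_neg p24]
      split <;> omega
    by_cases h3 : e = s(u, v)
    · subst h3
      rw [if_neg h1, if_neg h2, if_pos rfl, if_pos rfl,
        if_neg (Ne.symm p13), if_neg (Ne.symm p23), if_neg p34]
      split <;> omega
    by_cases h4 : e = s(x, y)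
    · subst h4
      rw [if_neg h1, if_neg h2, if_neg h3, if_pos rfl, if_pos rfl,
        if_neg (Ne.symm p14), if_neg (Ne.symm p24), if_neg (Ne.symm p34)]
      split <;> omega
    · rw [if_neg h1, if_neg h2, if_neg h3, if_neg h4, if_neg h1, if_neg h2, if_neg h3, if_neg h4]
  -- degrees
  have hdeg : ∀ w : V, ∑ e ∈ G'.edgeFinset.filter (fun e => w ∈ e), m' e = d := by
    intro w
    have bal : ((if w ∈ s(x, u) then 1 else 0) + (if w ∈ s(v, y) then 1 else 0) : ℕ)
        = (if w ∈ s(u, v) then 1 else 0) + (if w ∈ s(x, y) then 1 else 0) := by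
      simp only [Sym2.mem_iff]
      by_cases h1 : w = x <;> by_cases h2 : w = u <;> by_cases h3 : w = v <;>
        by_cases h4 : w = y <;>
        simp [h1, h2, h3, h4, hxu1, hxv1, hxy1, huv1, huy1, hvy1,
          Ne.symm hxu1, Ne.symm hxv1, Ne.symm hxy1, Ne.symm huv1, Ne.symm huy1, Ne.symm hvy1]
    have k := key (fun e => w ∈ e)
    rw [hext G' m' hzero' (fun e => w ∈ e)]
    rw [← hext G m hzero (fun e => w ∈ e)] at k
    rw [hreg w] at k
    omega
  refine ⟨hdeg, ?_⟩
  intro X hX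
  -- singleton cuts equal degree cuts
  have hsingle : ∀ w : V,
      ∑ e ∈ G'.edgeFinset.filter
        (fun e => ∃ a ∈ ({w} : Finset V), ∃ b, b ∉ ({w} : Finset V) ∧ e = s(a, b)), m' e = d := by
    intro w
    rw [← hdeg w]
    apply Finset.sum_congr _ (fun _ _ => rfl)
    apply Finset.filter_congr
    intro e he
    induction e using Sym2.ind with
    | h p q =>
      have hadj : G'.Adj p q := by
        rw [← SimpleGraph.mem_edgeSet, ← SimpleGraph.mem_edgeFinset] at *
        exact he
      have hpq : p ≠ q := hadj.ne
      simp only [Finset.mem_singleton, eq_iff_iff]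
      constructor
      · rintro ⟨a, rfl, b, hb, hab⟩
        rw [hab]; exact Sym2.mem_mk_left a b
      · intro hw
        rcases Sym2.mem_iff.mp hw with h | h
        · exact ⟨w, rfl, q,
            by simp only [Finset.mem_singleton, h]; exact Ne.symm hpq,
            by rw [h]⟩
        · exact ⟨w, rfl, p,
            by simp only [Finset.mem_singleton, h]; exact hpq,
            by rw [h]; exact Sym2.eq_swap⟩
  by_cases hc1 : X.card = 1
  · obtain ⟨w, rfl⟩ := Finset.card_eq_one.mp hc1
    exact le_of_eq (hsingle w).symm
  by_cases hc2 : Fintype.card V - X.card = 1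
  · -- complement is a singleton
    have hcompl : Xᶜ.card = 1 := by rw [Finset.card_compl]; exact hc2
    obtain ⟨w, hw⟩ := Finset.card_eq_one.mp hcompl
    have hflip : ∀ e : Sym2 V,
        (∃ a ∈ X, ∃ b, b ∉ X ∧ e = s(a, b)) ↔
        (∃ a ∈ ({w} : Finset V), ∃ b, b ∉ ({w} : Finset V) ∧ e = s(a, b)) := by
      intro e
      rw [← hw]
      constructor
      · rintro ⟨a, ha, b, hb, rfl⟩
        exact ⟨b, Finset.mem_compl.mpr hb, a, by simp [ha], Sym2.eq_swap⟩
      · rintro ⟨a, ha, b, hb, rfl⟩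
        have ha' : a ∉ X := Finset.mem_compl.mp ha
        have hb' : b ∈ X := by
          by_contra hbX
          exact hb (Finset.mem_compl.mpr hbX)
        exact ⟨b, hb', a, ha', Sym2.eq_swap⟩
    have : ∑ e ∈ G'.edgeFinset.filter
        (fun e => ∃ a ∈ X, ∃ b, b ∉ X ∧ e = s(a, b)), m' e
        = ∑ e ∈ G'.edgeFinset.filter
        (fun e => ∃ a ∈ ({w} : Finset V), ∃ b, b ∉ ({w} : Finset V) ∧ e = s(a, b)), m' e := by
      apply Finset.sum_congr _ (fun _ _ => rfl)
      apply Finset.filter_congr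
      intro e _
      exact hflip e
    rw [this, hsingle w]
  · -- main case: use the strengthened bound
    have hs := hstrong X hX hc1 hc2
    have k := key (fun e => ∃ a ∈ X, ∃ b, b ∉ X ∧ e = s(a, b))
    rw [← hext G m hzero (fun e => ∃ a ∈ X, ∃ b, b ∉ X ∧ e = s(a, b))] at k
    rw [hext G' m' hzero' (fun e => ∃ a ∈ X, ∃ b, b ∉ X ∧ e = s(a, b))]
    have b1 : (if (∃ a ∈ X, ∃ b, b ∉ X ∧ s(x, u) = s(a, b)) then 1 else 0) ≤ 1 := by
      split <;> omega
    have b2 : (if (∃ a ∈ X, ∃ b, b ∉ X ∧ s(v, y) = s(a, b)) then 1 else 0) ≤ 1 := by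
      split <;> omega
    omega
end
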